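/- Soundness of the abstract score: Let T be a finite training set of labeled examples over 𝒳 × Fin k, n : ℕ, and φ a decidable predicate on inputs. For every T' ∈ Δₙ(T), score(T', φ) ∈ score#(⟨T, n⟩, φ); that is, there exist reals m₁ ∈ [|T|φ| − min(n, |T|φ|), |T|φ|], e₁ ∈ ent#(⟨T, n⟩|#φ), m₂ ∈ [|T|¬φ| − min(n, |T|¬φ|), |T|¬φ|], e₂ ∈ ent#(⟨T, n⟩|#¬φ) with score(T', φ) = m₁·e₁ + m₂·e₂. -/
import Mathlib


/-- The n-poisoning perturbed set: all subsets of `T` missing at most `n` elements. -/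
def Perturb {α : Type*} [DecidableEq α] (T : Finset α) (n : ℕ) : Set (Finset α) :=
  {T' | T' ⊆ T ∧ (T \ T').card ≤ n}

variable {X : Type*} [DecidableEq X] {k : ℕ}

/-- `cnt T i` is the number of elements of `T` with class label `i`. -/
def cnt (T : Finset (X × Fin k)) (i : Fin k) : ℕ :=
  (T.filter fun e => e.2 = i).card

/-- The class probability `pᵢ(T) = cᵢ(T) / |T|` (with `pᵢ(∅) = 0` by `0/0 = 0`). -/
noncomputable def cprob (T : Finset (X × Fin k)) (i : Fin k) : ℝ :=
  (cnt T i : ℝ) / (T.card : ℝ)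

/-- The abstract class-probability transformer. -/
noncomputable def cprobAbs (T : Finset (X × Fin k)) (n : ℕ) (i : Fin k) : Set ℝ :=
  if n < T.card then
    {p | ∃ a b : ℝ, max 0 ((cnt T i : ℝ) - n) ≤ a ∧ a ≤ (cnt T i : ℝ) ∧
      (T.card : ℝ) - n ≤ b ∧ b ≤ (T.card : ℝ) ∧ p = a / b}
  else Set.Icc (0 : ℝ) 1

/-- The Gini impurity `ent(T) = Σᵢ pᵢ(T)(1 − pᵢ(T))`. -/
noncomputable def gini (T : Finset (X × Fin k)) : ℝ :=
  ∑ i : Fin k, cprob T i * (1 - cprob T i)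

/-- The abstract Gini impurity. -/
noncomputable def giniAbs (T : Finset (X × Fin k)) (n : ℕ) : Set ℝ :=
  {e | ∃ q q' : Fin k → ℝ, (∀ i, q i ∈ cprobAbs T n i) ∧ (∀ i, q' i ∈ cprobAbs T n i) ∧
    e = ∑ i : Fin k, q i * (1 - q' i)}

/-- `T|φ`: filter of `T` by a (Bool-valued, hence decidable) predicate `φ` on
inputs, applied to the first component. -/
def restr (T : Finset (X × Fin k)) (φ : X → Bool) : Finset (X × Fin k) :=
  T.filter fun e => φ e.1 = true

/-- `T|¬φ`. -/
def restrNeg (T : Finset (X × Fin k)) (φ : X → Bool) : Finset (X × Fin k) :=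
  T.filter fun e => φ e.1 = false

/-- The concrete score `score(T, φ) = |T|φ| · ent(T|φ) + |T|¬φ| · ent(T|¬φ)`. -/
noncomputable def scoreC (T : Finset (X × Fin k)) (φ : X → Bool) : ℝ :=
  ((restr T φ).card : ℝ) * gini (restr T φ) + ((restrNeg T φ).card : ℝ) * gini (restrNeg T φ)

/-- The abstract score `score#(⟨T, n⟩, φ)`. -/
noncomputable def scoreAbs (T : Finset (X × Fin k)) (n : ℕ) (φ : X → Bool) : Set ℝ :=
  {s | ∃ m₁ e₁ m₂ e₂ : ℝ,
    ((restr T φ).card : ℝ) - (min n (restr T φ).card : ℕ) ≤ m₁ ∧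
    m₁ ≤ ((restr T φ).card : ℝ) ∧
    e₁ ∈ giniAbs (restr T φ) (min n (restr T φ).card) ∧
    ((restrNeg T φ).card : ℝ) - (min n (restrNeg T φ).card : ℕ) ≤ m₂ ∧
    m₂ ≤ ((restrNeg T φ).card : ℝ) ∧
    e₂ ∈ giniAbs (restrNeg T φ) (min n (restrNeg T φ).card) ∧
    s = m₁ * e₁ + m₂ * e₂}

lemma cnt_le_cnt {T' T : Finset (X × Fin k)} (h : T' ⊆ T) (i : Fin k) :
    cnt T' i ≤ cnt T i :=
  Finset.card_le_card (Finset.filter_subset_filter _ h)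

lemma cnt_le_add {T' T : Finset (X × Fin k)} (h : T' ⊆ T) (i : Fin k) :
    cnt T i ≤ cnt T' i + (T \ T').card := by
  have hsub : (T.filter fun e => e.2 = i) ⊆ (T'.filter fun e => e.2 = i) ∪ (T \ T') := by
    intro e he
    simp only [Finset.mem_filter, Finset.mem_union, Finset.mem_sdiff] at he ⊢
    by_cases h' : e ∈ T'
    · exact Or.inl ⟨h', he.2⟩
    · exact Or.inr ⟨he.1, h'⟩
  calc cnt T i ≤ ((T'.filter fun e => e.2 = i) ∪ (T \ T')).card := Finset.card_le_card hsub
    _ ≤ _ := Finset.card_union_le _ _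

lemma card_le_add {T' T : Finset (X × Fin k)} (h : T' ⊆ T) :
    T.card ≤ T'.card + (T \ T').card := by
  have := Finset.card_sdiff_add_card_eq_card h
  omega

lemma cprob_mem_cprobAbs {T' T : Finset (X × Fin k)} {n : ℕ} (h1 : T' ⊆ T)
    (h2 : (T \ T').card ≤ n) (i : Fin k) : cprob T' i ∈ cprobAbs T n i := by
  unfold cprobAbs
  split
  · refine ⟨(cnt T' i : ℝ), (T'.card : ℝ), ?_, ?_, ?_, ?_, rfl⟩
    · refine max_le (by positivity) ?_
      have := cnt_le_add h1 i
      have : cnt T i ≤ cnt T' i + n := by omega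
      have : (cnt T i : ℝ) ≤ (cnt T' i : ℝ) + n := by exact_mod_cast this
      linarith
    · exact_mod_cast cnt_le_cnt h1 i
    · have := card_le_add h1
      have : T.card ≤ T'.card + n := by omega
      have : (T.card : ℝ) ≤ (T'.card : ℝ) + n := by exact_mod_cast this
      linarith
    · exact_mod_cast Finset.card_le_card h1
  · constructor
    · unfold cprob; positivity
    · unfold cprob
      apply div_le_one_of_le₀
      · exact_mod_cast Finset.card_le_card (Finset.filter_subset _ _)
      · positivity

lemma gini_mem_giniAbs {T' T : Finset (X × Fin k)} {n : ℕ} (h1 : T' ⊆ T)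
    (h2 : (T \ T').card ≤ n) : gini T' ∈ giniAbs T n :=
  ⟨cprob T', cprob T', fun i => cprob_mem_cprobAbs h1 h2 i,
    fun i => cprob_mem_cprobAbs h1 h2 i, rfl⟩

lemma restr_perturb {T' T : Finset (X × Fin k)} {n : ℕ} (φ : X → Bool) (b : Bool)
    (h1 : T' ⊆ T) (h2 : (T \ T').card ≤ n) :
    (T.filter fun e => φ e.1 = b) ⊇ (T'.filter fun e => φ e.1 = b) ∧
    ((T.filter fun e => φ e.1 = b) \ (T'.filter fun e => φ e.1 = b)).card
      ≤ min n (T.filter fun e => φ e.1 = b).card := by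
  have hsub : ((T.filter fun e => φ e.1 = b) \ (T'.filter fun e => φ e.1 = b)) ⊆ T \ T' := by
    intro e he
    simp only [Finset.mem_sdiff, Finset.mem_filter, not_and] at he ⊢
    exact ⟨he.1.1, fun hmem => (he.2 hmem) he.1.2⟩
  refine ⟨Finset.filter_subset_filter _ h1, le_min ?_ ?_⟩
  · exact le_trans (Finset.card_le_card hsub) h2
  · exact Finset.card_le_card (Finset.sdiff_subset)

/-- Soundness of the abstract score: for every `T' ∈ Δₙ(T)`,
`score(T', φ) ∈ score#(⟨T, n⟩, φ)`. -/
theorem score_sound (hk : 1 ≤ k) (T : Finset (X × Fin k)) (n : ℕ) (φ : X → Bool)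
    (T' : Finset (X × Fin k)) (hT' : T' ∈ Perturb T n) :
    scoreC T' φ ∈ scoreAbs T n φ := by
  obtain ⟨h1, h2⟩ := hT'
  have hp := restr_perturb φ true h1 h2
  have hq := restr_perturb φ false h1 h2
  refine ⟨((restr T' φ).card : ℝ), gini (restr T' φ), ((restrNeg T' φ).card : ℝ),
    gini (restrNeg T' φ), ?_, ?_, ?_, ?_, ?_, ?_, rfl⟩
  · have hle : (restr T φ).card ≤ (restr T' φ).card + min n (restr T φ).card := by
      have h3 := card_le_add hp.1
      have h4 := hp.2
      unfold restr
      omega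
    have : ((restr T φ).card : ℝ) ≤ ((restr T' φ).card : ℝ) + (min n (restr T φ).card : ℕ) := by
      exact_mod_cast hle
    linarith
  · exact_mod_cast Finset.card_le_card hp.1
  · exact gini_mem_giniAbs hp.1 hp.2
  · have hle : (restrNeg T φ).card ≤ (restrNeg T' φ).card + min n (restrNeg T φ).card := by
      have h3 := card_le_add hq.1
      have h4 := hq.2
      unfold restrNeg
      omega
    have : ((restrNeg T φ).card : ℝ) ≤ ((restrNeg T' φ).card : ℝ) + (min n (restrNeg T φ).card : ℕ) := by
      exact_mod_cast hle
    linarith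
  · exact_mod_cast Finset.card_le_card hq.1
  · exact gini_mem_giniAbs hq.1 hq.2
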